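/- Let k₁, k₂, m₁, m₂, M₁, M₂ be positive constants with m₁ < M₁ and m₂ < M₂, and let P, Q : [0,∞) → ℝ be continuous with m₁ < P < M₁ and -M₂ < Q < -m₂. Define s(t) = (k₁+k₂)t, R_v(t) = k₁ e^{k₁ t} ∫₀ᵗ e^{-k₁ t'} P dt' + P(t), R_u(t) = k₂ e^{k₂ t} ∫₀ᵗ e^{-k₂ t'} Q dt' + Q(t), and u, v by u(0)=v(0)=0, u' = e^{-s} R_v, v' = -e^{-s} R_u. Then as t → ∞: s(t) → ∞, u(t) converges to a finite limit ≤ M₁/k₂, and v(t) converges to a finite limit ≤ M₂/k₁. -/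

import Mathlib

/-! The function `R = R_v` is the derivative of the Duhamel solution `y` of `y' = k₁ y + P`,
`y 0 = 0`, so comparing with constant forcing gives `m₁ e^{k₁ t} ≤ R ≤ M₁ e^{k₁ t}`, and
`u' = e^{-(k₁ + k₂) t} R` lies between `m₁ e^{-k₂ t}` and `M₁ e^{-k₂ t}`. Hence
`u - (m₁ / k₂)(1 - e^{-k₂ t})` is nondecreasing and bounded, so `u` converges, while
`u ≤ (M₁ / k₂)(1 - e^{-k₂ t})` bounds the limit. The same argument applies to `v` with
`-R_u`, the Duhamel derivative for `-Q`. -/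

open Filter Real Set Topology intervalIntegral

theorem MonotoneOn.exists_tendsto_atTop_of_le {α β : Type*} [LinearOrder α]
    [ConditionallyCompleteLinearOrder β] [TopologicalSpace β] [OrderTopology β]
    {f : α → β} {a : α} {B : β} (hf : MonotoneOn f (Ici a)) (hB : ∀ t ≥ a, f t ≤ B) :
    ∃ L, Tendsto f atTop (𝓝 L) := by
  have hmono : Monotone fun t => f (max t a) := fun s t hst =>
    hf (le_max_right s a) (le_max_right t a) (max_le_max hst le_rfl)
  have hbdd : BddAbove (range fun t => f (max t a)) := by
    refine ⟨B, ?_⟩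
    rintro _ ⟨t, rfl⟩
    exact hB _ (le_max_right t a)
  refine ⟨_, (tendsto_atTop_ciSup hmono hbdd).congr' ?_⟩
  filter_upwards [eventually_ge_atTop a] with t ht
  rw [max_eq_left ht]

theorem monotoneOn_Ici_of_hasDerivAt_nonneg {f f' : ℝ → ℝ} {a : ℝ}
    (hf : ∀ t ≥ a, HasDerivAt f (f' t) t) (hf' : ∀ t ≥ a, 0 ≤ f' t) :
    MonotoneOn f (Ici a) :=
  monotoneOn_of_hasDerivWithinAt_nonneg (convex_Ici a)
    (fun t ht => (hf t ht).continuousAt.continuousWithinAt)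
    (fun t ht => (hf t (interior_subset ht)).hasDerivWithinAt)
    (fun t ht => hf' t (interior_subset ht))

theorem hasDerivAt_exp_neg_mul (c t : ℝ) :
    HasDerivAt (fun x => exp (-(c * x))) (-c * exp (-(c * t))) t := by
  have h : HasDerivAt (fun x => -(c * x)) (-c) t := by
    simpa using ((hasDerivAt_id t).const_mul c).fun_neg
  simpa [mul_comm] using h.exp

theorem hasDerivAt_one_sub_exp_neg_mul_div {c : ℝ} (hc : c ≠ 0) (t : ℝ) :
    HasDerivAt (fun t => (1 - exp (-(c * t))) / c) (exp (-(c * t))) t := by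
  refine (((hasDerivAt_exp_neg_mul c t).const_sub 1).div_const c).congr_deriv ?_
  field_simp

theorem mul_integral_exp_neg_mul (k t : ℝ) :
    k * ∫ x in (0 : ℝ)..t, exp (-(k * x)) = 1 - exp (-(k * t)) := by
  have h : ∀ x ∈ uIcc (0 : ℝ) t, HasDerivAt (fun x => -exp (-(k * x))) (k * exp (-(k * x))) x :=
    fun x _ => by simpa using (hasDerivAt_exp_neg_mul k x).fun_neg
  rw [← integral_const_mul, integral_eq_sub_of_hasDerivAt h
    (Continuous.intervalIntegrable (by fun_prop) _ _)]
  simp only [mul_zero, neg_zero, exp_zero, sub_neg_eq_add]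
  ring

theorem exists_tendsto_le_div_of_exp_bounds_deriv {f f' : ℝ → ℝ} {a b c : ℝ} (hc : 0 < c)
    (hf0 : f 0 = 0) (hf : ∀ t ≥ 0, HasDerivAt f (f' t) t)
    (ha : ∀ t ≥ 0, a * exp (-(c * t)) ≤ f' t) (hb : ∀ t ≥ 0, f' t ≤ b * exp (-(c * t))) :
    ∃ L, Tendsto f atTop (𝓝 L) ∧ L ≤ b / c := by
  set E : ℝ → ℝ := fun t => (1 - exp (-(c * t))) / c with hE_def
  have hE : ∀ t, HasDerivAt E (exp (-(c * t))) t := hasDerivAt_one_sub_exp_neg_mul_div hc.ne'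
  have hE_le : ∀ t, E t ≤ 1 / c := fun t =>
    div_le_div_of_nonneg_right (by linarith [exp_pos (-(c * t))]) hc.le
  have hE_lim : Tendsto E atTop (𝓝 (1 / c)) := by
    have h := tendsto_exp_neg_atTop_nhds_zero.comp (tendsto_id.const_mul_atTop hc)
    simpa using (h.const_sub 1).div_const c
  have hf_le : ∀ t ≥ 0, f t ≤ b * E t := by
    have hmono : MonotoneOn (fun t => b * E t - f t) (Ici 0) :=
      monotoneOn_Ici_of_hasDerivAt_nonneg (fun t ht => ((hE t).const_mul b).sub (hf t ht))
        (fun t ht => sub_nonneg.2 (hb t ht))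
    intro t ht
    have h := hmono self_mem_Ici ht ht
    simp only [hE_def, mul_zero, neg_zero, exp_zero, sub_self, zero_div, hf0] at h
    linarith
  have hab : a ≤ b := by simpa using (ha 0 le_rfl).trans (hb 0 le_rfl)
  obtain ⟨L₀, hL₀⟩ : ∃ L₀, Tendsto (fun t => f t - a * E t) atTop (𝓝 L₀) := by
    refine (monotoneOn_Ici_of_hasDerivAt_nonneg (fun t ht => (hf t ht).sub ((hE t).const_mul a))
      (fun t ht => sub_nonneg.2 (ha t ht))).exists_tendsto_atTop_of_le (B := (b - a) / c) ?_
    intro t ht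
    calc f t - a * E t ≤ (b - a) * E t := by linarith [hf_le t ht]
      _ ≤ (b - a) * (1 / c) := mul_le_mul_of_nonneg_left (hE_le t) (sub_nonneg.2 hab)
      _ = (b - a) / c := by ring
  have hf_lim : Tendsto f atTop (𝓝 (L₀ + a * (1 / c))) := by
    simpa using hL₀.add (hE_lim.const_mul a)
  refine ⟨_, hf_lim, ?_⟩
  have h := le_of_tendsto_of_tendsto hf_lim (hE_lim.const_mul b)
    ((eventually_ge_atTop 0).mono hf_le)
  simpa [div_eq_mul_one_div b c] using h

/-- `y'` for the solution `y t = ∫₀ᵗ e^{k (t - t')} P t' dt'` of `y' = k y + P`, `y 0 = 0`;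
the paper's `R_v` is `duhamelDeriv k₁ P` and its `R_u` is `duhamelDeriv k₂ Q`. -/
noncomputable def duhamelDeriv (k : ℝ) (P : ℝ → ℝ) (t : ℝ) : ℝ :=
  k * exp (k * t) * (∫ t' in (0 : ℝ)..t, exp (-(k * t')) * P t') + P t

theorem duhamelDeriv_neg (k : ℝ) (P : ℝ → ℝ) (t : ℝ) :
    duhamelDeriv k (-P) t = -duhamelDeriv k P t := by
  simp only [duhamelDeriv, Pi.neg_apply, mul_neg, integral_neg]
  ring

theorem duhamelDeriv_le {k b t : ℝ} {P : ℝ → ℝ} (hk : 0 ≤ k) (ht : 0 ≤ t)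
    (hPi : IntervalIntegrable P MeasureTheory.volume 0 t) (hP : ∀ x ∈ Icc 0 t, P x ≤ b) :
    duhamelDeriv k P t ≤ b * exp (k * t) := by
  have hI : ∫ x in (0 : ℝ)..t, exp (-(k * x)) * P x ≤ ∫ x in (0 : ℝ)..t, exp (-(k * x)) * b :=
    integral_mono_on ht (hPi.continuousOn_mul (by fun_prop))
      (Continuous.intervalIntegrable (by fun_prop) _ _)
      fun x hx => mul_le_mul_of_nonneg_left (hP x hx) (exp_pos _).le
  have hJ := mul_integral_exp_neg_mul k t
  have hexp : exp (k * t) * exp (-(k * t)) = 1 := by rw [← exp_add]; simp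
  rw [integral_mul_const] at hI
  calc duhamelDeriv k P t
      ≤ k * exp (k * t) * ((∫ x in (0 : ℝ)..t, exp (-(k * x))) * b) + b :=
        add_le_add (mul_le_mul_of_nonneg_left hI (by positivity)) (hP t ⟨ht, le_rfl⟩)
    _ = b * exp (k * t) := by linear_combination (b * exp (k * t)) * hJ - b * hexp

theorem le_duhamelDeriv {k a t : ℝ} {P : ℝ → ℝ} (hk : 0 ≤ k) (ht : 0 ≤ t)
    (hPi : IntervalIntegrable P MeasureTheory.volume 0 t) (hP : ∀ x ∈ Icc 0 t, a ≤ P x) :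
    a * exp (k * t) ≤ duhamelDeriv k P t := by
  have h := duhamelDeriv_le (b := -a) hk ht hPi.neg fun x hx => neg_le_neg (hP x hx)
  rw [duhamelDeriv_neg] at h
  linarith

theorem exists_tendsto_le_div_of_hasDerivAt_duhamelDeriv {k c a b : ℝ} {P f : ℝ → ℝ}
    (hk : 0 ≤ k) (hc : 0 < c) (hPc : ContinuousOn P (Ici 0))
    (hP : ∀ t ≥ 0, a ≤ P t ∧ P t ≤ b) (hf0 : f 0 = 0)
    (hf : ∀ t ≥ 0, HasDerivAt f (exp (-((k + c) * t)) * duhamelDeriv k P t) t) :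
    ∃ L, Tendsto f atTop (𝓝 L) ∧ L ≤ b / c := by
  have hPi : ∀ t ≥ 0, IntervalIntegrable P MeasureTheory.volume 0 t := fun t ht =>
    (hPc.mono (by rw [uIcc_of_le ht]; exact Icc_subset_Ici_self)).intervalIntegrable
  have hscale : ∀ d t, exp (-((k + c) * t)) * (d * exp (k * t)) = d * exp (-(c * t)) := by
    intro d t
    rw [mul_left_comm, ← exp_add]
    ring_nf
  refine exists_tendsto_le_div_of_exp_bounds_deriv (a := a) hc hf0 hf
    (fun t ht => ?_) (fun t ht => ?_)
  · rw [← hscale]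
    exact mul_le_mul_of_nonneg_left
      (le_duhamelDeriv hk ht (hPi t ht) fun x hx => (hP x hx.1).1) (exp_pos _).le
  · rw [← hscale]
    exact mul_le_mul_of_nonneg_left
      (duhamelDeriv_le hk ht (hPi t ht) fun x hx => (hP x hx.1).2) (exp_pos _).le

theorem stmt_5_general (k₁ k₂ m₁ m₂ M₁ M₂ : ℝ)
    (hk₁ : 0 < k₁) (hk₂ : 0 < k₂)
    (P Q : ℝ → ℝ) (hPc : ContinuousOn P (Set.Ici 0)) (hQc : ContinuousOn Q (Set.Ici 0))
    (hP : ∀ t ∈ Set.Ici (0 : ℝ), m₁ < P t ∧ P t < M₁)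
    (hQ : ∀ t ∈ Set.Ici (0 : ℝ), -M₂ < Q t ∧ Q t < -m₂)
    (s Rv Ru u v : ℝ → ℝ)
    (hs : ∀ t, s t = (k₁ + k₂) * t)
    (hRv : ∀ t, Rv t =
      k₁ * Real.exp (k₁ * t) * (∫ t' in (0 : ℝ)..t, Real.exp (-(k₁ * t')) * P t') + P t)
    (hRu : ∀ t, Ru t =
      k₂ * Real.exp (k₂ * t) * (∫ t' in (0 : ℝ)..t, Real.exp (-(k₂ * t')) * Q t') + Q t)
    (hu0 : u 0 = 0) (hv0 : v 0 = 0)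
    (hu : ∀ t ∈ Set.Ici (0 : ℝ), HasDerivAt u (Real.exp (-(s t)) * Rv t) t)
    (hv : ∀ t ∈ Set.Ici (0 : ℝ), HasDerivAt v (-(Real.exp (-(s t)) * Ru t)) t) :
    Tendsto s atTop atTop ∧
    (∃ L₁, Tendsto u atTop (nhds L₁) ∧ L₁ ≤ M₁ / k₂) ∧
    (∃ L₂, Tendsto v atTop (nhds L₂) ∧ L₂ ≤ M₂ / k₁) := by
  have hRv' : ∀ t, Rv t = duhamelDeriv k₁ P t := hRv
  have hRu' : ∀ t, -Ru t = duhamelDeriv k₂ (-Q) t := fun t => by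
    rw [duhamelDeriv_neg, hRu]
    rfl
  refine ⟨?_, ?_, ?_⟩
  · rw [show s = fun t => (k₁ + k₂) * t from funext hs]
    exact tendsto_id.const_mul_atTop (by positivity)
  · refine exists_tendsto_le_div_of_hasDerivAt_duhamelDeriv hk₁.le hk₂ hPc
      (fun t ht => ⟨(hP t ht).1.le, (hP t ht).2.le⟩) hu0 fun t ht => ?_
    simpa only [hs, hRv'] using hu t ht
  · refine exists_tendsto_le_div_of_hasDerivAt_duhamelDeriv hk₂.le hk₁ hQc.neg
      (a := m₂)
      (fun t ht => ⟨le_neg_of_le_neg (hQ t ht).2.le, neg_le_of_neg_le (hQ t ht).1.le⟩)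
      hv0 fun t ht => ?_
    simpa only [hs, add_comm k₁, ← mul_neg, hRu'] using hv t ht

/-- Proposition 5.1 (finite-time blowup on `R = R_a`):
`s(t) → ∞` while `u` and `v` converge to finite limits bounded by
`M₁/k₂` and `M₂/k₁` respectively. -/
theorem stmt_5 (k₁ k₂ m₁ m₂ M₁ M₂ : ℝ)
    (hk₁ : 0 < k₁) (hk₂ : 0 < k₂) (hm₁ : 0 < m₁) (hm₂ : 0 < m₂)
    (hM₁ : m₁ < M₁) (hM₂ : m₂ < M₂)
    (P Q : ℝ → ℝ) (hPc : ContinuousOn P (Set.Ici 0)) (hQc : ContinuousOn Q (Set.Ici 0))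
    (hP : ∀ t ∈ Set.Ici (0 : ℝ), m₁ < P t ∧ P t < M₁)
    (hQ : ∀ t ∈ Set.Ici (0 : ℝ), -M₂ < Q t ∧ Q t < -m₂)
    (s Rv Ru u v : ℝ → ℝ)
    (hs : ∀ t, s t = (k₁ + k₂) * t)
    (hRv : ∀ t, Rv t =
      k₁ * Real.exp (k₁ * t) * (∫ t' in (0 : ℝ)..t, Real.exp (-(k₁ * t')) * P t') + P t)
    (hRu : ∀ t, Ru t =
      k₂ * Real.exp (k₂ * t) * (∫ t' in (0 : ℝ)..t, Real.exp (-(k₂ * t')) * Q t') + Q t)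
    (hu0 : u 0 = 0) (hv0 : v 0 = 0)
    (hu : ∀ t ∈ Set.Ici (0 : ℝ), HasDerivAt u (Real.exp (-(s t)) * Rv t) t)
    (hv : ∀ t ∈ Set.Ici (0 : ℝ), HasDerivAt v (-(Real.exp (-(s t)) * Ru t)) t) :
    Tendsto s atTop atTop ∧
    (∃ L₁, Tendsto u atTop (nhds L₁) ∧ L₁ ≤ M₁ / k₂) ∧
    (∃ L₂, Tendsto v atTop (nhds L₂) ∧ L₂ ≤ M₂ / k₁) :=
  stmt_5_general k₁ k₂ m₁ m₂ M₁ M₂ hk₁ hk₂ P Q hPc hQc hP hQ s Rv Ru u v hs hRv hRu hu0 hv0 hu hv
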